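/- arXiv:2102.07410 — 5 statements merged into one kernel-verified Lean document; each statement's English description precedes it below -/
import Mathlib

section
/- Let (M, d) be a metric space, G a finite group acting on M by isometries, and μ a Borel measure on M. Assume there exists x ∈ M whose stabilizer is trivial (g•x = x implies g = 1), and assume that for every pair of distinct points ξ, ζ in the orbit {g•x : g ∈ G}, the equidistant set {y ∈ M : d(ξ, y) = d(ζ, y)} has μ-measure zero. Then there exists an open subset V ⊆ M such that (g•V) ∩ (h•V) = ∅ for all g ≠ h in G, and μ(M \ ⋃_{g∈G} g•V) = 0. -/
open MeasureTheory Pointwise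

/-- **Fundamental domain lemma.** If a finite group `G` acts by isometries on a metric
space `M`, there is a point `x` with trivial stabiliser, and every equidistant set between
two distinct points of the orbit of `x` is `μ`-null, then there is an open set `V` whose
translates by distinct group elements are disjoint and whose translates cover `M` up to a
`μ`-null set. -/
theorem fundamental_domain_exists
    {M : Type*} [MetricSpace M] [MeasurableSpace M] [BorelSpace M]
    {G : Type*} [Group G] [Finite G] [MulAction G M]
    (hiso : ∀ (g : G) (y z : M), dist (g • y) (g • z) = dist y z)
    (μ : Measure M)
    (hx : ∃ x : M, (∀ g : G, g • x = x → g = 1) ∧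
      ∀ ξ ζ : M, ξ ∈ MulAction.orbit G x → ζ ∈ MulAction.orbit G x → ξ ≠ ζ →
        μ {y : M | dist ξ y = dist ζ y} = 0) :
    ∃ V : Set M, IsOpen V ∧
      (∀ g h : G, g ≠ h → (g • V) ∩ (h • V) = ∅) ∧
      μ ((⋃ g : G, g • V)ᶜ) = 0 := by
  classical
  haveI := Fintype.ofFinite G
  obtain ⟨x, hstab, hnull⟩ := hx
  set V : Set M := {y | ∀ g : G, g ≠ 1 → dist x y < dist (g • x) y} with hVdef
  have hdist : ∀ (g : G) (z y : M), dist (g • z) y = dist z (g⁻¹ • y) := by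
    intro g z y
    conv_rhs => rw [← hiso g z (g⁻¹ • y), smul_inv_smul]
  have horbne : ∀ g h : G, g ≠ h → g • x ≠ h • x := by
    intro g h hgh he
    have h1 : (h⁻¹ * g) • x = x := by rw [mul_smul, he, inv_smul_smul]
    exact hgh ((inv_mul_eq_one.mp (hstab _ h1)).symm)
  have hmem : ∀ (g : G) (y : M),
      y ∈ g • V ↔ ∀ h : G, h ≠ g → dist (g • x) y < dist (h • x) y := by
    intro g y
    rw [Set.mem_smul_set_iff_inv_smul_mem]
    constructor
    · intro hy h hh
      have hk : g⁻¹ * h ≠ 1 := by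
        intro hc; exact hh (by rwa [inv_mul_eq_one, eq_comm] at hc)
      have := hy (g⁻¹ * h) hk
      rw [hdist g x y]
      rw [show dist ((g⁻¹ * h) • x) (g⁻¹ • y) = dist (h • x) y by
        rw [mul_smul]; exact hiso g⁻¹ (h • x) y] at this
      exact this
    · intro hy k hk
      have hgk : g * k ≠ g := by
        intro hc; exact hk (by simpa using mul_left_cancel (a := g) (by rw [hc, mul_one]))
      have := hy (g * k) hgk
      rw [hdist g x y] at this
      rw [show dist ((g * k) • x) y = dist (k • x) (g⁻¹ • y) by
        rw [mul_smul, hdist g (k • x) y]] at this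
      exact this
  refine ⟨V, ?_, ?_, ?_⟩
  · have hV : V = ⋂ (g : G) (_ : g ≠ 1), {y | dist x y < dist (g • x) y} := by
      ext y; simp [hVdef]
    rw [hV]
    exact isOpen_iInter_of_finite fun g => isOpen_iInter_of_finite fun _ =>
      isOpen_lt (continuous_const.dist continuous_id) (continuous_const.dist continuous_id)
  · intro g h hgh
    ext y
    simp only [Set.mem_inter_iff, Set.mem_empty_iff_false, iff_false, not_and]
    intro hg hh
    have h1 := (hmem g y).mp hg h hgh.symm
    have h2 := (hmem h y).mp hh g hgh
    exact absurd (h1.trans h2) (lt_irrefl _)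
  · refine measure_mono_null (t := ⋃ (g : G) (h : G) (_ : g ≠ h),
      {y : M | dist (g • x) y = dist (h • x) y}) ?_ ?_
    · intro y hy
      simp only [Set.mem_compl_iff, Set.mem_iUnion, not_exists] at hy
      obtain ⟨g, -, hgmin⟩ := Finset.exists_min_image Finset.univ
        (fun g : G => dist (g • x) y) ⟨1, Finset.mem_univ 1⟩
      have := (hmem g y).not.mp (hy g)
      push_neg at this
      obtain ⟨h, hh, hle⟩ := this
      have hge := hgmin h (Finset.mem_univ h)
      simp only [Set.mem_iUnion]
      exact ⟨g, h, hh.symm, le_antisymm hge hle⟩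
    · refine measure_iUnion_null fun g => measure_iUnion_null fun h =>
        measure_iUnion_null fun hgh =>
        hnull (g • x) (h • x) ⟨g, rfl⟩ ⟨h, rfl⟩ (horbne g h hgh)
end

section
/- Let μ and ν be probability measures on a measurable space E and let u : E → ℝ be a bounded measurable function. Then ∫ u dμ − log ∫ e^u dν ≤ H(μ|ν). -/
/-! Tilting `ν` by `u` turns the Donsker–Varadhan gap into a relative entropy:
`∫ llr μ (ν.tilted u) dμ = ∫ llr μ ν dμ - ∫ u dμ + log ∫ e^u dν`,
so the inequality is Gibbs' inequality for `μ` against the probability measure `ν.tilted u`. -/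

open MeasureTheory

open Classical in
noncomputable def relEntropy {E : Type*} [MeasurableSpace E] (μ ν : Measure E) : EReal :=
  if μ ≪ ν ∧ Integrable (llr μ ν) μ then ((∫ x, llr μ ν x ∂μ : ℝ) : EReal) else ⊤

section

variable {E : Type*} [MeasurableSpace E] {μ ν : Measure E}

lemma integral_llr_nonneg [IsProbabilityMeasure μ] [IsProbabilityMeasure ν]
    (hμν : μ ≪ ν) (h_int : Integrable (llr μ ν) μ) : 0 ≤ ∫ x, llr μ ν x ∂μ := by
  simpa using InformationTheory.integral_llr_add_sub_measure_univ_nonneg hμν h_int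

lemma integral_sub_log_integral_exp_le_integral_llr [IsProbabilityMeasure μ] [SigmaFinite ν]
    {f : E → ℝ} (hμν : μ ≪ ν) (h_int : Integrable (llr μ ν) μ) (hfμ : Integrable f μ)
    (hfν : Integrable (fun x ↦ Real.exp (f x)) ν) :
    ∫ x, f x ∂μ - Real.log (∫ x, Real.exp (f x) ∂ν) ≤ ∫ x, llr μ ν x ∂μ := by
  have : NeZero ν := ⟨fun hν ↦ NeZero.ne μ (Measure.absolutelyContinuous_zero_iff.mp (hν ▸ hμν))⟩
  have : IsProbabilityMeasure (ν.tilted f) := isProbabilityMeasure_tilted hfν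
  have h_gibbs := integral_llr_nonneg (hμν.trans (absolutelyContinuous_tilted hfν))
    (integrable_llr_tilted_right hμν hfμ h_int hfν)
  rw [integral_llr_tilted_right hμν hfμ hfν h_int] at h_gibbs
  linarith

end

/-- **Donsker–Varadhan inequality.** For probability measures `μ, ν` and a bounded
measurable function `u`, one has `∫ u dμ − log ∫ e^u dν ≤ H(μ|ν)`. -/
theorem donsker_varadhan_le_relEntropy {E : Type*} [MeasurableSpace E]
    (μ ν : Measure E) [IsProbabilityMeasure μ] [IsProbabilityMeasure ν]
    (u : E → ℝ) (hu : Measurable u) (hbdd : ∃ C : ℝ, ∀ x, |u x| ≤ C) :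
    ((∫ x, u x ∂μ - Real.log (∫ x, Real.exp (u x) ∂ν) : ℝ) : EReal) ≤ relEntropy μ ν := by
  unfold relEntropy
  split_ifs with h
  · obtain ⟨C, hC⟩ := hbdd
    have hu_int : Integrable u μ := .of_bound hu.aestronglyMeasurable C (ae_of_all _ hC)
    have hexp_int : Integrable (fun x ↦ Real.exp (u x)) ν :=
      .of_bound (by fun_prop) (Real.exp C)
        (ae_of_all _ fun x ↦ by simpa using (abs_le.mp (hC x)).2)
    exact EReal.coe_le_coe_iff.mpr
      (integral_sub_log_integral_exp_le_integral_llr h.1 h.2 hu_int hexp_int)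
  · exact le_top
end

section
/- Let ν be a probability measure on a measurable space E and let C be a convex set of probability measures on E (i.e., t·μ₀ + (1−t)·μ₁ ∈ C whenever μ₀, μ₁ ∈ C and t ∈ [0,1]). Suppose the infimum m = inf{H(μ|ν) : μ ∈ C} is finite and that μ₀, μ₁ ∈ C satisfy H(μ₀|ν) = H(μ₁|ν) = m. Then μ₀ = μ₁; in other words, a minimiser of the relative entropy over a convex constraint set is unique whenever the minimal value is finite. -/
open MeasureTheory

/-!
Write `H(μ|ν) = ∫ φ (dμ/dν) dν` with `φ y = y log y`, which is strictly convex on `[0, ∞)`.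
With `fᵢ = dμᵢ/dν`, the density of `t μ₀ + (1 - t) μ₁` is `t f₀ + (1 - t) f₁`, so if `μ₀ ≠ μ₁`
the densities differ on a set of positive `ν`-measure and strict convexity gives
`H(t μ₀ + (1 - t) μ₁ | ν) < t H(μ₀|ν) + (1 - t) H(μ₁|ν)`. Two distinct minimisers would thus put
their midpoint, which lies in `C`, strictly below the infimum.
-/

open Real
open scoped ENNReal

theorem integral_lt_integral_of_ae_le_of_measure_setOf_lt_ne_zero {α : Type*}
    [MeasurableSpace α] {μ : Measure α} {f g : α → ℝ} (hf : Integrable f μ)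
    (hg : Integrable g μ) (hle : f ≤ᵐ[μ] g) (hlt : μ {x | f x < g x} ≠ 0) :
    ∫ x, f x ∂μ < ∫ x, g x ∂μ := by
  rw [← sub_pos, ← integral_sub hg hf, integral_pos_iff_support_of_nonneg_ae
    (hle.mono fun x hx => sub_nonneg.2 hx) (hg.sub hf)]
  exact pos_iff_ne_zero.2 (mt (measure_mono_null fun x hx => (sub_pos.2 hx.out).ne') hlt)

theorem mul_log_convexCombination_le {x y t : ℝ} (hx : 0 ≤ x) (hy : 0 ≤ y) (ht₀ : 0 ≤ t)
    (ht₁ : t ≤ 1) :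
    (t * x + (1 - t) * y) * log (t * x + (1 - t) * y) ≤
      t * (x * log x) + (1 - t) * (y * log y) := by
  simpa only [smul_eq_mul] using convexOn_mul_log.2 (Set.mem_Ici.2 hx) (Set.mem_Ici.2 hy) ht₀
    (sub_nonneg.2 ht₁) (add_sub_cancel t 1)

theorem mul_log_convexCombination_lt {x y t : ℝ} (hx : 0 ≤ x) (hy : 0 ≤ y) (hxy : x ≠ y)
    (ht₀ : 0 < t) (ht₁ : t < 1) :
    (t * x + (1 - t) * y) * log (t * x + (1 - t) * y) <
      t * (x * log x) + (1 - t) * (y * log y) := by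
  simpa only [smul_eq_mul] using strictConvexOn_mul_log.2 (Set.mem_Ici.2 hx) (Set.mem_Ici.2 hy)
    hxy ht₀ (sub_pos.2 ht₁) (add_sub_cancel t 1)

section
variable {E : Type*} [MeasurableSpace E] {μ μ₀ μ₁ ν : Measure E}

theorem relEntropy_eq_coe_iff [SigmaFinite μ] [SigmaFinite ν] {a : ℝ} :
    relEntropy μ ν = a ↔ μ ≪ ν ∧
      Integrable (fun x => (μ.rnDeriv ν x).toReal * log (μ.rnDeriv ν x).toReal) ν ∧
      ∫ x, (μ.rnDeriv ν x).toReal * log (μ.rnDeriv ν x).toReal ∂ν = a := by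
  unfold relEntropy
  split_ifs with h
  · rw [integrable_rnDeriv_mul_log_iff h.1, integral_rnDeriv_mul_log h.1, EReal.coe_eq_coe_iff]
    tauto
  · refine iff_of_false (EReal.top_ne_coe a) fun ⟨hac, hint, _⟩ => h ?_
    exact ⟨hac, (integrable_rnDeriv_mul_log_iff hac).1 hint⟩

theorem Measure.rnDeriv_smul_add_smul [IsFiniteMeasure μ₀] [IsFiniteMeasure μ₁] [SigmaFinite ν]
    {a b : ℝ≥0∞} (ha : a ≠ ∞) (hb : b ≠ ∞) :
    (a • μ₀ + b • μ₁).rnDeriv ν =ᵐ[ν] a • μ₀.rnDeriv ν + b • μ₁.rnDeriv ν := by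
  have := μ₀.smul_finite ha
  have := μ₁.smul_finite hb
  filter_upwards [Measure.rnDeriv_add (a • μ₀) (b • μ₁) ν,
    Measure.rnDeriv_smul_left_of_ne_top μ₀ ν ha, Measure.rnDeriv_smul_left_of_ne_top μ₁ ν hb]
    with x hx h₀ h₁
  simp only [hx, Pi.add_apply, h₀, h₁]

theorem Measure.eq_of_toReal_rnDeriv_ae_eq [SigmaFinite μ₀] [SigmaFinite μ₁] [SigmaFinite ν]
    (h₀ : μ₀ ≪ ν) (h₁ : μ₁ ≪ ν)
    (h : (fun x => (μ₀.rnDeriv ν x).toReal) =ᵐ[ν] fun x => (μ₁.rnDeriv ν x).toReal) :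
    μ₀ = μ₁ := by
  have hae : μ₀.rnDeriv ν =ᵐ[ν] μ₁.rnDeriv ν := by
    filter_upwards [h, Measure.rnDeriv_lt_top μ₀ ν, Measure.rnDeriv_lt_top μ₁ ν]
      with x hx hx₀ hx₁
    exact (ENNReal.toReal_eq_toReal_iff' hx₀.ne hx₁.ne).1 hx
  rw [← Measure.withDensity_rnDeriv_eq μ₀ ν h₀, ← Measure.withDensity_rnDeriv_eq μ₁ ν h₁,
    withDensity_congr_ae hae]

theorem integrable_mul_log_convexCombination [IsFiniteMeasure ν] {f₀ f₁ : E → ℝ}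
    (hm₀ : AEStronglyMeasurable f₀ ν) (hm₁ : AEStronglyMeasurable f₁ ν)
    (hf₀ : ∀ x, 0 ≤ f₀ x) (hf₁ : ∀ x, 0 ≤ f₁ x)
    (hi₀ : Integrable (fun x => f₀ x * log (f₀ x)) ν)
    (hi₁ : Integrable (fun x => f₁ x * log (f₁ x)) ν) {t : ℝ} (ht₀ : 0 ≤ t) (ht₁ : t ≤ 1) :
    Integrable (fun x => (t * f₀ x + (1 - t) * f₁ x) * log (t * f₀ x + (1 - t) * f₁ x)) ν := by
  have hg (x : E) : 0 ≤ t * f₀ x + (1 - t) * f₁ x :=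
    add_nonneg (mul_nonneg ht₀ (hf₀ x)) (mul_nonneg (sub_nonneg.2 ht₁) (hf₁ x))
  refine integrable_of_le_of_le (g₁ := fun _ => -1)
    (g₂ := fun x => t * (f₀ x * log (f₀ x)) + (1 - t) * (f₁ x * log (f₁ x)))
    (continuous_mul_log.comp_aestronglyMeasurable ((hm₀.const_mul t).add (hm₁.const_mul (1 - t))))
    (Filter.Eventually.of_forall fun x => ?_) (Filter.Eventually.of_forall fun x => ?_)
    (integrable_const _) ((hi₀.const_mul t).add (hi₁.const_mul (1 - t)))
  · linarith [self_sub_one_le_mul_log (hg x), hg x]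
  · exact mul_log_convexCombination_le (hf₀ x) (hf₁ x) ht₀ ht₁

theorem integral_mul_log_convexCombination_lt [IsFiniteMeasure ν] {f₀ f₁ : E → ℝ}
    (hm₀ : AEStronglyMeasurable f₀ ν) (hm₁ : AEStronglyMeasurable f₁ ν)
    (hf₀ : ∀ x, 0 ≤ f₀ x) (hf₁ : ∀ x, 0 ≤ f₁ x)
    (hi₀ : Integrable (fun x => f₀ x * log (f₀ x)) ν)
    (hi₁ : Integrable (fun x => f₁ x * log (f₁ x)) ν) (hne : ν {x | f₀ x ≠ f₁ x} ≠ 0)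
    {t : ℝ} (ht₀ : 0 < t) (ht₁ : t < 1) :
    ∫ x, (t * f₀ x + (1 - t) * f₁ x) * log (t * f₀ x + (1 - t) * f₁ x) ∂ν <
      t * ∫ x, f₀ x * log (f₀ x) ∂ν + (1 - t) * ∫ x, f₁ x * log (f₁ x) ∂ν := by
  rw [← integral_const_mul, ← integral_const_mul, ← integral_add (hi₀.const_mul t)
    (hi₁.const_mul (1 - t))]
  refine integral_lt_integral_of_ae_le_of_measure_setOf_lt_ne_zero
    (integrable_mul_log_convexCombination hm₀ hm₁ hf₀ hf₁ hi₀ hi₁ ht₀.le ht₁.le)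
    ((hi₀.const_mul t).add (hi₁.const_mul (1 - t))) (Filter.Eventually.of_forall fun x => ?_)
    (fun h => hne (measure_mono_null (fun x hx => ?_) h))
  · exact mul_log_convexCombination_le (hf₀ x) (hf₁ x) ht₀.le ht₁.le
  · exact mul_log_convexCombination_lt (hf₀ x) (hf₁ x) hx ht₀ ht₁

theorem relEntropy_convexCombination_lt [IsFiniteMeasure μ₀] [IsFiniteMeasure μ₁]
    [IsFiniteMeasure ν] {a b t : ℝ} (h₀ : relEntropy μ₀ ν = a) (h₁ : relEntropy μ₁ ν = b)
    (hne : μ₀ ≠ μ₁) (ht₀ : 0 < t) (ht₁ : t < 1) :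
    relEntropy (ENNReal.ofReal t • μ₀ + ENNReal.ofReal (1 - t) • μ₁) ν <
      (t * a + (1 - t) * b : ℝ) := by
  obtain ⟨hac₀, hi₀, rfl⟩ := relEntropy_eq_coe_iff.1 h₀
  obtain ⟨hac₁, hi₁, rfl⟩ := relEntropy_eq_coe_iff.1 h₁
  set f₀ := fun x => (μ₀.rnDeriv ν x).toReal
  set f₁ := fun x => (μ₁.rnDeriv ν x).toReal
  set μ := ENNReal.ofReal t • μ₀ + ENNReal.ofReal (1 - t) • μ₁
  have := μ₀.smul_finite (ENNReal.ofReal_ne_top (r := t))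
  have := μ₁.smul_finite (ENNReal.ofReal_ne_top (r := 1 - t))
  have hac : μ ≪ ν := (hac₀.smul_left _).add_left (hac₁.smul_left _)
  have hdens : (fun x => (μ.rnDeriv ν x).toReal) =ᵐ[ν] fun x => t * f₀ x + (1 - t) * f₁ x := by
    filter_upwards [Measure.rnDeriv_smul_add_smul (μ₀ := μ₀) (μ₁ := μ₁) (ν := ν)
      (ENNReal.ofReal_ne_top (r := t)) (ENNReal.ofReal_ne_top (r := 1 - t)),
      Measure.rnDeriv_lt_top μ₀ ν, Measure.rnDeriv_lt_top μ₁ ν] with x hx hx₀ hx₁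
    simp only [μ, hx, Pi.add_apply, Pi.smul_apply, smul_eq_mul]
    rw [ENNReal.toReal_add (ENNReal.mul_ne_top ENNReal.ofReal_ne_top hx₀.ne)
      (ENNReal.mul_ne_top ENNReal.ofReal_ne_top hx₁.ne), ENNReal.toReal_mul, ENNReal.toReal_mul,
      ENNReal.toReal_ofReal ht₀.le, ENNReal.toReal_ofReal (sub_nonneg.2 ht₁.le)]
  have hm₀ : AEStronglyMeasurable f₀ ν :=
    (Measure.measurable_rnDeriv μ₀ ν).ennreal_toReal.aestronglyMeasurable
  have hm₁ : AEStronglyMeasurable f₁ ν :=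
    (Measure.measurable_rnDeriv μ₁ ν).ennreal_toReal.aestronglyMeasurable
  have hφdens : (fun x => (μ.rnDeriv ν x).toReal * log (μ.rnDeriv ν x).toReal) =ᵐ[ν]
      fun x => (t * f₀ x + (1 - t) * f₁ x) * log (t * f₀ x + (1 - t) * f₁ x) :=
    hdens.fun_comp fun y => y * log y
  have hne' : ν {x | f₀ x ≠ f₁ x} ≠ 0 := fun h =>
    hne (Measure.eq_of_toReal_rnDeriv_ae_eq hac₀ hac₁ (ae_iff.2 (by simpa using h)))
  rw [(relEntropy_eq_coe_iff.2 ⟨hac, (integrable_mul_log_convexCombination hm₀ hm₁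
    (fun _ => ENNReal.toReal_nonneg) (fun _ => ENNReal.toReal_nonneg) hi₀ hi₁ ht₀.le ht₁.le).congr
    hφdens.symm, rfl⟩), EReal.coe_lt_coe_iff, integral_congr_ae hφdens]
  exact integral_mul_log_convexCombination_lt hm₀ hm₁ (fun _ => ENNReal.toReal_nonneg)
    (fun _ => ENNReal.toReal_nonneg) hi₀ hi₁ hne' ht₀ ht₁
end

/-- **Uniqueness of the entropy minimiser over a convex constraint set.** If `C` is a
convex set of probability measures, the infimum `m` of `H(·|ν)` over `C` is finite, and
`μ₀, μ₁ ∈ C` both attain it, then `μ₀ = μ₁`. -/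
theorem relEntropy_minimiser_unique {E : Type*} [MeasurableSpace E]
    (ν : Measure E) [IsProbabilityMeasure ν]
    (C : Set (Measure E)) (hCprob : ∀ μ ∈ C, IsProbabilityMeasure μ)
    (hCconv : ∀ μ₀ ∈ C, ∀ μ₁ ∈ C, ∀ t : ℝ, t ∈ Set.Icc (0 : ℝ) 1 →
      ENNReal.ofReal t • μ₀ + ENNReal.ofReal (1 - t) • μ₁ ∈ C)
    (m : EReal) (hm : m = ⨅ μ ∈ C, relEntropy μ ν)
    (hmfin : m ≠ ⊤ ∧ m ≠ ⊥)
    (μ₀ μ₁ : Measure E) (h₀ : μ₀ ∈ C) (h₁ : μ₁ ∈ C)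
    (hH₀ : relEntropy μ₀ ν = m) (hH₁ : relEntropy μ₁ ν = m) :
    μ₀ = μ₁ := by
  have := hCprob μ₀ h₀
  have := hCprob μ₁ h₁
  by_contra hne
  obtain ⟨r, hr⟩ : ∃ r : ℝ, m = r := ⟨m.toReal, (EReal.coe_toReal hmfin.1 hmfin.2).symm⟩
  have hmid_mem := hCconv μ₀ h₀ μ₁ h₁ (1 / 2) ⟨by norm_num, by norm_num⟩
  have hmin : m ≤ relEntropy (ENNReal.ofReal (1 / 2) • μ₀ + ENNReal.ofReal (1 - 1 / 2) • μ₁) ν :=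
    hm ▸ iInf₂_le _ hmid_mem
  have hlt := relEntropy_convexCombination_lt (hH₀.trans hr) (hH₁.trans hr) hne
    (by norm_num : (0 : ℝ) < 1 / 2) (by norm_num)
  rw [show 1 / 2 * r + (1 - 1 / 2) * r = r by ring, ← hr] at hlt
  exact (hmin.trans_lt hlt).false
end

section
/- Let E and F be standard Borel spaces, let κ be a Markov kernel from E to F, and let T : F → E be a measurable map such that κ(x)({y ∈ F : T(y) = x}) = 1 for every x ∈ E. Then for all probability measures α and β on E, H(α∘κ | β∘κ) = H(α|β), where α∘κ denotes the probability measure A ↦ ∫ κ(x)(A) dα(x) on F. -/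
/-!
Both `μ ↦ κ ∘ₘ μ` and `μ ↦ μ.map T` are data-processing steps, so neither increases the
Kullback–Leibler divergence; the fiber condition says that `T` undoes `κ`, i.e. `κ.map T` is the
identity kernel, so the divergence is squeezed between two equal quantities. On probability
measures `relEntropy` is Mathlib's `klDiv`.
-/

open MeasureTheory ProbabilityTheory InformationTheory

/-- With equal masses the correction term `ν.real univ - μ.real univ` in `klDiv` vanishes, and
Gibbs' inequality makes the truncation by `ENNReal.ofReal` harmless. -/
lemma relEntropy_eq_klDiv {E : Type*} [MeasurableSpace E] {μ ν : Measure E}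
    [IsFiniteMeasure μ] [IsFiniteMeasure ν] (h : μ Set.univ = ν Set.univ) :
    relEntropy μ ν = klDiv μ ν := by
  have hmass : ν.real Set.univ - μ.real Set.univ = 0 := by
    rw [measureReal_def, measureReal_def, h, sub_self]
  unfold relEntropy
  split_ifs with hac
  · obtain ⟨hμν, hint⟩ := hac
    have hnonneg := integral_llr_add_sub_measure_univ_nonneg hμν hint
    rw [add_sub_assoc, hmass, add_zero] at hnonneg
    rw [klDiv_of_ac_of_integrable hμν hint, add_sub_assoc, hmass, add_zero,
      EReal.coe_ennreal_ofReal, max_eq_left hnonneg]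
  · rw [klDiv_eq_top_iff.2 fun hμν hint => hac ⟨hμν, hint⟩, EReal.coe_ennreal_top]

namespace ProbabilityTheory.Kernel

variable {E F : Type*} [MeasurableSpace E] [MeasurableSpace F] {κ : Kernel E F} {T : F → E}

lemma ae_eq_of_measure_fiber_eq_one [MeasurableSingletonClass E] [IsMarkovKernel κ]
    (hT : Measurable T) (hκT : ∀ x, κ x {y | T y = x} = 1) (x : E) :
    ∀ᵐ y ∂κ x, T y = x := by
  have hfiber : MeasurableSet {y | T y = x} := hT (measurableSet_singleton x)
  rw [ae_iff_measure_eq hfiber.nullMeasurableSet, measure_univ]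
  exact hκT x

lemma map_eq_id_of_ae_eq [IsMarkovKernel κ] (hT : Measurable T)
    (h : ∀ x, ∀ᵐ y ∂κ x, T y = x) : κ.map T = Kernel.id := by
  ext1 x
  rw [map_apply κ hT, Measure.map_congr (h x), Measure.map_const, id_apply, measure_univ,
    one_smul]

end ProbabilityTheory.Kernel

theorem InformationTheory.klDiv_comp_right_eq_of_map_eq_id {E F : Type*} [MeasurableSpace E]
    [MeasurableSpace F] (μ ν : Measure E) [IsFiniteMeasure μ] [IsFiniteMeasure ν]
    {κ : Kernel E F} [IsMarkovKernel κ] {T : F → E} (hT : Measurable T)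
    (h : κ.map T = Kernel.id) : klDiv (κ ∘ₘ μ) (κ ∘ₘ ν) = klDiv μ ν := by
  refine le_antisymm (klDiv_comp_right_le μ ν κ) ?_
  simpa [Measure.map_comp _ _ hT, h] using klDiv_map_le (κ ∘ₘ μ) (κ ∘ₘ ν) hT

theorem relEntropy_bind_eq_general {E F : Type*} [MeasurableSpace E] [MeasurableSpace F]
    [StandardBorelSpace E]
    (κ : Kernel E F) [IsMarkovKernel κ]
    (T : F → E) (hT : Measurable T)
    (hκT : ∀ x : E, κ x {y : F | T y = x} = 1)
    (α β : Measure E) [IsProbabilityMeasure α] [IsProbabilityMeasure β] :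
    relEntropy (α.bind fun x => κ x) (β.bind fun x => κ x) = relEntropy α β := by
  have hmap : κ.map T = Kernel.id :=
    Kernel.map_eq_id_of_ae_eq hT (Kernel.ae_eq_of_measure_fiber_eq_one hT hκT)
  change relEntropy (κ ∘ₘ α) (κ ∘ₘ β) = _
  rw [relEntropy_eq_klDiv (by simp), relEntropy_eq_klDiv (by simp),
    klDiv_comp_right_eq_of_map_eq_id α β hT hmap]

/-- If `κ` is a Markov kernel from `E` to `F` and `T : F → E` is a measurable map with
`κ(x)({T = x}) = 1` for every `x`, then composing with `κ` preserves relative entropy: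
`H(α∘κ | β∘κ) = H(α|β)` for all probability measures `α, β` on `E`. -/
theorem relEntropy_bind_eq {E F : Type*} [MeasurableSpace E] [MeasurableSpace F]
    [StandardBorelSpace E] [StandardBorelSpace F]
    (κ : Kernel E F) [IsMarkovKernel κ]
    (T : F → E) (hT : Measurable T)
    (hκT : ∀ x : E, κ x {y : F | T y = x} = 1)
    (α β : Measure E) [IsProbabilityMeasure α] [IsProbabilityMeasure β] :
    relEntropy (α.bind fun x => κ x) (β.bind fun x => κ x) = relEntropy α β :=
  relEntropy_bind_eq_general κ T hT hκT α β
end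

section
/- With the section setup, assume additionally that there are pairwise disjoint measurable sets (U_g)_{g∈G} in M such that (s_g)_*σ̃(M \ U_g) = 0 for every g ∈ G. Let π̃ be a probability measure on N × N whose first and second marginals both equal σ̃, and define π = (1/|G|²) Σ_{(g,h)∈G×G} (s_g × s_h)_*π̃. Then the relative entropies coincide: H(π | σ ⊗ σ) = H(π̃ | σ̃ ⊗ σ̃). -/
open MeasureTheory ENNReal

/-!
With `Q = q × q` and `T_{g,h} = s_g × s_h` we have `Q ∘ T_{g,h} = id`; `π` and `σ ⊗ σ` are the
averages of the pushforwards of `π̃` and `σ̃ ⊗ σ̃` along the sections `T_{g,h}`, and `Q` pushes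
them back to `π̃` and `σ̃ ⊗ σ̃`. If `π̃ = f · (σ̃ ⊗ σ̃)`, pushing along a section turns the density
`f` into `f ∘ Q`, so `π = (f ∘ Q) · (σ ⊗ σ)`: the log-likelihood ratio of `π` factors through `Q`,
and `Q` carries the entropy integral of `π` onto that of `π̃`. If `π̃` is not absolutely
continuous, neither is `π`, since pushing forward by `Q` preserves absolute continuity.
-/

namespace MeasureTheory

variable {α β : Type*} [MeasurableSpace α] [MeasurableSpace β]

lemma Measure.map_withDensity_comp {T : α → β} (hT : Measurable T) {f : β → ℝ≥0∞}
    (hf : Measurable f) (μ : Measure α) :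
    (μ.withDensity (f ∘ T)).map T = (μ.map T).withDensity f := by
  ext s hs
  rw [Measure.map_apply hT hs, withDensity_apply _ (hT hs), withDensity_apply _ hs,
    setLIntegral_map hs hf hT]
  rfl

lemma relEntropy_eq_top_of_not_absolutelyContinuous {μ ν : Measure α} (h : ¬ μ ≪ ν) :
    relEntropy μ ν = ⊤ :=
  if_neg fun h' => h h'.1

lemma relEntropy_map_eq_of_llr_ae_eq_comp {Q : α → β} (hQ : Measurable Q) {μ ν : Measure α}
    (hμν : μ ≪ ν) (hllr : llr μ ν =ᵐ[μ] llr (μ.map Q) (ν.map Q) ∘ Q) :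
    relEntropy (μ.map Q) (ν.map Q) = relEntropy μ ν := by
  have hmeas : AEStronglyMeasurable (llr (μ.map Q) (ν.map Q)) (μ.map Q) :=
    (measurable_llr _ _).aestronglyMeasurable
  have hint : Integrable (llr (μ.map Q) (ν.map Q)) (μ.map Q) ↔ Integrable (llr μ ν) μ :=
    (integrable_map_measure hmeas hQ.aemeasurable).trans (integrable_congr hllr).symm
  have hintegral : ∫ y, llr (μ.map Q) (ν.map Q) y ∂(μ.map Q) = ∫ x, llr μ ν x ∂μ := by
    rw [integral_congr_ae hllr, integral_map hQ.aemeasurable hmeas]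
    rfl
  classical
  unfold relEntropy
  rw [hintegral]
  exact if_congr (by simp only [hμν, hμν.map hQ, true_and, hint]) rfl rfl

lemma relEntropy_withDensity_comp {Q : α → β} (hQ : Measurable Q) {f : β → ℝ≥0∞}
    (hf : Measurable f) (ν : Measure α) [SigmaFinite (ν.map Q)] :
    relEntropy ((ν.map Q).withDensity f) (ν.map Q) = relEntropy (ν.withDensity (f ∘ Q)) ν := by
  have : SigmaFinite ν := SigmaFinite.of_map ν hQ.aemeasurable ‹_›
  set μ := ν.withDensity (f ∘ Q)
  have hmap : μ.map Q = (ν.map Q).withDensity f := Measure.map_withDensity_comp hQ hf ν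
  have hrn : μ.rnDeriv ν =ᵐ[ν] f ∘ Q := Measure.rnDeriv_withDensity ν (hf.comp hQ)
  have hrn_map : (μ.map Q).rnDeriv (ν.map Q) ∘ Q =ᵐ[ν] f ∘ Q :=
    ae_of_ae_map (p := fun y => (μ.map Q).rnDeriv (ν.map Q) y = f y) hQ.aemeasurable
      (hmap ▸ Measure.rnDeriv_withDensity (ν.map Q) hf)
  have hllr : llr μ ν =ᵐ[μ] llr (μ.map Q) (ν.map Q) ∘ Q := by
    filter_upwards [withDensity_absolutelyContinuous ν _ |>.ae_le (hrn.trans hrn_map.symm)]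
      with x hx
    simp only [llr, Function.comp_apply, hx]
  rw [← hmap]
  exact relEntropy_map_eq_of_llr_ae_eq_comp hQ (withDensity_absolutelyContinuous _ _) hllr

noncomputable def sectionAverage {ι : Type*} [Fintype ι] (T : ι → β → α) (μ : Measure β) :
    Measure α :=
  (Fintype.card ι : ℝ≥0∞)⁻¹ • ∑ i, μ.map (T i)

section SectionAverage

variable {ι : Type*} [Fintype ι] {Q : α → β} {T : ι → β → α}

lemma map_sectionAverage [Nonempty ι] (hQ : Measurable Q) (hT : ∀ i, Measurable (T i))
    (hQT : ∀ i, Q ∘ T i = id) (μ : Measure β) :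
    (sectionAverage T μ).map Q = μ := by
  have hcard : (Fintype.card ι : ℝ≥0∞) ≠ 0 := by simp
  simp only [sectionAverage, Measure.map_smul, Measure.map_finset_sum' hQ.aemeasurable,
    Measure.map_map hQ (hT _), hQT, Measure.map_id, Finset.sum_const, Finset.card_univ,
    ← Nat.cast_smul_eq_nsmul ℝ≥0∞, smul_smul, ENNReal.inv_mul_cancel hcard (natCast_ne_top _),
    one_smul]

lemma sectionAverage_withDensity (hQ : Measurable Q) (hT : ∀ i, Measurable (T i))
    (hQT : ∀ i, Q ∘ T i = id) (μ : Measure β) {f : β → ℝ≥0∞} (hf : Measurable f) :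
    sectionAverage T (μ.withDensity f) = (sectionAverage T μ).withDensity (f ∘ Q) := by
  have hpush (i : ι) : (μ.withDensity f).map (T i) = (μ.map (T i)).withDensity (f ∘ Q) := by
    rw [← Measure.map_withDensity_comp (hT i) (hf.comp hQ), Function.comp_assoc, hQT i,
      Function.comp_id]
  rw [sectionAverage, sectionAverage, withDensity_smul_measure,
    ← Measure.sum_fintype (fun i => μ.map (T i)), withDensity_sum, Measure.sum_fintype]
  simp only [hpush]

lemma sectionAverage_prod {κ γ δ : Type*} [Fintype κ] [MeasurableSpace γ] [MeasurableSpace δ]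
    {S : κ → δ → γ} (hT : ∀ i, Measurable (T i)) (hS : ∀ j, Measurable (S j))
    (μ : Measure β) (ν : Measure δ) [SFinite μ] [SFinite ν] :
    (sectionAverage T μ).prod (sectionAverage S ν) =
      sectionAverage (fun p : ι × κ => Prod.map (T p.1) (S p.2)) (μ.prod ν) := by
  rw [sectionAverage, sectionAverage, sectionAverage,
    ← Measure.sum_fintype (fun i => μ.map (T i)), ← Measure.sum_fintype (fun j => ν.map (S j)),
    Measure.prod_smul_left, Measure.prod_smul_right, Measure.prod_sum, Measure.sum_fintype,
    smul_smul, Fintype.card_prod, Nat.cast_mul,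
    ENNReal.mul_inv (Or.inr (natCast_ne_top _)) (Or.inl (natCast_ne_top _)), mul_comm]
  simp only [Measure.map_prod_map _ _ (hT _) (hS _)]

lemma relEntropy_sectionAverage [Nonempty ι] (hQ : Measurable Q) (hT : ∀ i, Measurable (T i))
    (hQT : ∀ i, Q ∘ T i = id) (μ ν : Measure β) [SFinite μ] [SigmaFinite ν] :
    relEntropy (sectionAverage T μ) (sectionAverage T ν) = relEntropy μ ν := by
  have hmap := map_sectionAverage hQ hT hQT
  by_cases hμν : μ ≪ ν
  · have : SigmaFinite ((sectionAverage T ν).map Q) := by rw [hmap]; infer_instance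
    have hμ : μ = ν.withDensity (μ.rnDeriv ν) := (Measure.withDensity_rnDeriv_eq μ ν hμν).symm
    calc relEntropy (sectionAverage T μ) (sectionAverage T ν)
        = relEntropy ((sectionAverage T ν).withDensity (μ.rnDeriv ν ∘ Q))
            (sectionAverage T ν) := by
          rw [← sectionAverage_withDensity hQ hT hQT ν (Measure.measurable_rnDeriv μ ν), ← hμ]
      _ = relEntropy (((sectionAverage T ν).map Q).withDensity (μ.rnDeriv ν))
            ((sectionAverage T ν).map Q) :=
          (relEntropy_withDensity_comp hQ (Measure.measurable_rnDeriv μ ν) _).symm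
      _ = relEntropy μ ν := by rw [hmap, ← hμ]
  · have hnot : ¬ sectionAverage T μ ≪ sectionAverage T ν := fun h =>
      hμν (hmap μ ▸ hmap ν ▸ h.map hQ)
    rw [relEntropy_eq_top_of_not_absolutelyContinuous hnot,
      relEntropy_eq_top_of_not_absolutelyContinuous hμν]

end SectionAverage

end MeasureTheory

theorem relEntropy_averaged_sections_eq_general {M N : Type*} [MeasurableSpace M] [MeasurableSpace N]
    {G : Type*} [Fintype G] [Nonempty G]
    (q : M → N) (hq : Measurable q)
    (s : G → N → M) (hs : ∀ g, Measurable (s g)) (hqs : ∀ g, q ∘ s g = id)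
    (σtilde : Measure N) [IsProbabilityMeasure σtilde]
    (σ : Measure M)
    (hσ : σ = (Fintype.card G : ℝ≥0∞)⁻¹ • ∑ g : G, σtilde.map (s g))
    (πtilde : Measure (N × N)) [IsProbabilityMeasure πtilde]
    (π : Measure (M × M))
    (hπ : π = ((Fintype.card G : ℝ≥0∞) ^ 2)⁻¹ •
      ∑ g : G, ∑ h : G, πtilde.map (Prod.map (s g) (s h))) :
    relEntropy π (σ.prod σ) = relEntropy πtilde (σtilde.prod σtilde) := by
  set T : G × G → N × N → M × M := fun p => Prod.map (s p.1) (s p.2)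
  have hT (p : G × G) : Measurable (T p) := (hs p.1).prodMap (hs p.2)
  have hQT (p : G × G) : Prod.map q q ∘ T p = id := by
    simp only [T, Prod.map_comp_map, hqs, Prod.map_id]
  have hσσ : σ.prod σ = sectionAverage T (σtilde.prod σtilde) := by
    rw [hσ]
    exact sectionAverage_prod hs hs σtilde σtilde
  have hπT : π = sectionAverage T πtilde := by
    rw [hπ, sectionAverage, Fintype.sum_prod_type, Fintype.card_prod, Nat.cast_mul, sq]
  rw [hσσ, hπT, relEntropy_sectionAverage (hq.prodMap hq) hT hQT]

/-- With measurable sections `s g` of `q` carrying `σ̃` to measures supported on pairwise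
disjoint sets `U g`, `σ = (1/|G|) Σ_g (s_g)_*σ̃` and
`π = (1/|G|²) Σ_{g,h} (s_g × s_h)_*π̃` (both marginals of `π̃` equal to `σ̃`), the
relative entropies coincide: `H(π | σ ⊗ σ) = H(π̃ | σ̃ ⊗ σ̃)`. -/
theorem relEntropy_averaged_sections_eq {M N : Type*} [MeasurableSpace M] [MeasurableSpace N]
    [StandardBorelSpace M] [StandardBorelSpace N]
    {G : Type*} [Fintype G] [Nonempty G]
    (q : M → N) (hq : Measurable q)
    (s : G → N → M) (hs : ∀ g, Measurable (s g)) (hqs : ∀ g, q ∘ s g = id)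
    (σtilde : Measure N) [IsProbabilityMeasure σtilde]
    (σ : Measure M)
    (hσ : σ = (Fintype.card G : ℝ≥0∞)⁻¹ • ∑ g : G, σtilde.map (s g))
    (U : G → Set M) (hU : ∀ g, MeasurableSet (U g))
    (hUdisj : ∀ g h : G, g ≠ h → Disjoint (U g) (U h))
    (hUnull : ∀ g, (σtilde.map (s g)) (U g)ᶜ = 0)
    (πtilde : Measure (N × N)) [IsProbabilityMeasure πtilde]
    (h1 : πtilde.map Prod.fst = σtilde) (h2 : πtilde.map Prod.snd = σtilde)
    (π : Measure (M × M))
    (hπ : π = ((Fintype.card G : ℝ≥0∞) ^ 2)⁻¹ •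
      ∑ g : G, ∑ h : G, πtilde.map (Prod.map (s g) (s h))) :
    relEntropy π (σ.prod σ) = relEntropy πtilde (σtilde.prod σtilde) :=
  relEntropy_averaged_sections_eq_general q hq s hs hqs σtilde σ hσ πtilde π hπ
end
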